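/- Let G(E) be a well-formed TFG for (N1,m1) ▷_E (N2,m2). For a marking m2' of N2, define Inv(m2') = { c restricted to N1 : c total, well-defined configuration with c ≡ m2' }. Then the family { Inv(m2') : m2' ∈ R(N2,m2) } is a partition of R(N1,m1): each set is non-empty, the sets are pairwise disjoint, and their union equals R(N1,m1). -/

import Mathlib

open Finset

/-- A Petri net over a type of places `P`. -/
structure PetriNet (P : Type) where
  Trans : Type
  pre : Trans → P → ℕ
  post : Trans → P → ℕ

/-- Firing relation between markings. -/
def PetriNet.fire {P : Type} (N : PetriNet P) (m m' : P → ℕ) : Prop :=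
  ∃ t : N.Trans, (∀ p, N.pre t p ≤ m p) ∧ ∀ p, m' p = m p - N.pre t p + N.post t p

/-- Reachability of a marking from an initial one. -/
def PetriNet.reach {P : Type} (N : PetriNet P) (m0 m : P → ℕ) : Prop :=
  Relation.ReflTransGen N.fire m0 m

/-- A marked net is safe (1-bounded) when every reachable marking has at most one token per place. -/
def PetriNet.Safe {P : Type} (N : PetriNet P) (m0 : P → ℕ) : Prop :=
  ∀ m, N.reach m0 m → ∀ p, m p ≤ 1

/-- Two places are concurrent when some reachable marking marks both positively. -/
def PetriNet.ConcPlaces {P : Type} (N : PetriNet P) (m0 : P → ℕ) (p q : P) : Prop :=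
  ∃ m, N.reach m0 m ∧ 0 < m p ∧ 0 < m q

/-- A Token Flow Graph: redundancy arcs `R`, agglomeration arcs `A` (disjoint from `R`,
enforced in well-formedness), and constant nodes given by `kval`. -/
structure TFG (V : Type) [DecidableEq V] where
  R : Finset (V × V)
  A : Finset (V × V)
  kval : V → Option ℕ

variable {V : Type} [DecidableEq V]

def TFG.Edge (G : TFG V) (v w : V) : Prop := (v, w) ∈ G.R ∨ (v, w) ∈ G.A

/-- `G.Reach v w` means `v →* w`. -/
def TFG.Reach (G : TFG V) : V → V → Prop := Relation.ReflTransGen G.Edge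

/-- Successor set `succ(v)` (includes `v` itself). -/
def TFG.succs (G : TFG V) (v : V) : Set V := {w | G.Reach v w}

/-- A root has no incoming arc. -/
def TFG.IsRoot (G : TFG V) (v : V) : Prop := ∀ w, ¬ G.Edge w v

/-- A ∘-leaf has no outgoing agglomeration arc. -/
def TFG.IsCircLeaf (G : TFG V) (v : V) : Prop := ∀ w, (v, w) ∉ G.A

/-- The set `X` such that `v ∘→ X` (agglomeration children of `v`). -/
def TFG.aggChildren (G : TFG V) (v : V) : Finset V :=
  (G.A.filter (fun e => e.1 = v)).image Prod.snd

/-- The set `X` such that `X →• v` (redundancy parents of `v`). -/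
def TFG.redParents (G : TFG V) (v : V) : Finset V :=
  (G.R.filter (fun e => e.2 = v)).image Prod.fst

/-- A configuration is a partial valuation of the nodes; it must agree with constant nodes. -/
def TFG.IsConfig (G : TFG V) (c : V → Option ℕ) : Prop :=
  ∀ v n, G.kval v = some n → c v = some n

/-- A configuration is total when it is defined on every node. -/
def TotalConf (c : V → Option ℕ) : Prop := ∀ v, c v ≠ none

/-- Value of a configuration at a node (0 if undefined). -/
def cval (c : V → Option ℕ) (v : V) : ℕ := (c v).getD 0

/-- Well-definedness of a configuration: conditions (CBot) and (CEq). -/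
def TFG.WellDef (G : TFG V) (c : V → Option ℕ) : Prop :=
  (∀ v w, G.Edge v w → (c v = none ↔ c w = none)) ∧
  (∀ v n, c v = some n →
    ((G.aggChildren v).Nonempty → n = ∑ w ∈ G.aggChildren v, cval c w) ∧
    ((G.redParents v).Nonempty → n = ∑ w ∈ G.redParents v, cval c w))

/-- A system of reduction equations: `(v, X)` stands for the equation `v = ∑_{w ∈ X} w`. -/
abbrev EqSys (V : Type) := Finset (V × Finset V)

/-- A (non-negative integer) solution of the system `E`. -/
def Solves (E : EqSys V) (s : V → ℕ) : Prop :=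
  ∀ e ∈ E, s e.1 = ∑ w ∈ e.2, s w

/-- `E, ⟦c⟧` is consistent: some solution of `E` extends the partial valuation `c`. -/
def ConsistentWith (E : EqSys V) (c : V → Option ℕ) : Prop :=
  ∃ s : V → ℕ, Solves E s ∧ ∀ v n, c v = some n → s v = n

/-- Variables occurring in `E`. -/
def fvars (E : EqSys V) : Set V := {v | ∃ e ∈ E, v = e.1 ∨ v ∈ e.2}

/-- View a marking over the set of places `P` as a partial configuration over `V`. -/
def mconf (P : Set V) [DecidablePred (· ∈ P)] (m : ↥P → ℕ) : V → Option ℕ :=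
  fun v => if h : v ∈ P then some (m ⟨v, h⟩) else none

/-- Restriction of a configuration to a set of places, seen as a marking. -/
def restrict (c : V → Option ℕ) (P : Set V) : ↥P → ℕ := fun p => cval c ↑p

/-- Compatibility `c ≡ m` of a configuration with a marking on `P`. -/
def CompatM (c : V → Option ℕ) (P : Set V) (m : ↥P → ℕ) : Prop :=
  ∀ p : ↥P, c ↑p = some (m p)

/-- A solution of `E` agrees with a marking on `P`. -/
def AgreesOn (s : V → ℕ) (P : Set V) (m : ↥P → ℕ) : Prop := ∀ p : ↥P, s ↑p = m p

/-- `E`-equivalence `(N1,m1) ▷_E (N2,m2)`: conditions (A1), (A2), (A3). -/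
structure EEquiv (E : EqSys V) (P1 P2 : Set V)
    (N1 : PetriNet ↥P1) (m1 : ↥P1 → ℕ) (N2 : PetriNet ↥P2) (m2 : ↥P2 → ℕ) : Prop where
  A1l : ∀ m, N1.reach m1 m → ∃ s, Solves E s ∧ AgreesOn s P1 m
  A1r : ∀ m, N2.reach m2 m → ∃ s, Solves E s ∧ AgreesOn s P2 m
  A2 : ∃ s, Solves E s ∧ AgreesOn s P1 m1 ∧ AgreesOn s P2 m2
  A3 : ∀ m1' m2', (∃ s, Solves E s ∧ AgreesOn s P1 m1' ∧ AgreesOn s P2 m2') →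
      (N1.reach m1 m1' ↔ N2.reach m2 m2')

/-- Well-formedness of a TFG for an equivalence statement: conditions (T1)–(T6). -/
structure WellFormed (G : TFG V) (E : EqSys V) (P1 P2 : Set V) : Prop where
  T1 : {v | G.kval v = none} = P1 ∪ P2 ∪ fvars E
  T2 : ∀ v, G.kval v ≠ none → G.IsRoot v
  T3a : ∀ p p' q, (p, q) ∈ G.A → G.Edge p' q → p' = p
  T3b : ∀ p q, ¬((p, q) ∈ G.R ∧ (p, q) ∈ G.A)
  T4 : ∀ v X, ((X = G.aggChildren v ∨ X = G.redParents v) ∧ X.Nonempty) ↔ (v, X) ∈ E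
  T5 : ∀ v, ¬ Relation.TransGen G.Edge v v
  T6root : ∀ v, G.kval v = none → (G.IsRoot v ↔ v ∈ P2)
  T6leaf : ∀ v, G.kval v = none → (G.IsCircLeaf v ↔ v ∈ P1)

/-- Node concurrency relation of the TFG: both nodes are positive in some
total, well-defined configuration whose restriction to `N2` is reachable. -/
def NodeConc (G : TFG V) (P2 : Set V) [DecidablePred (· ∈ P2)]
    (N2 : PetriNet ↥P2) (m2 : ↥P2 → ℕ) (v w : V) : Prop :=
  ∃ c, G.IsConfig c ∧ TotalConf c ∧ G.WellDef c ∧ N2.reach m2 (restrict c P2) ∧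
    0 < cval c v ∧ 0 < cval c w

/-!
A total well-defined configuration is determined by its restriction to `P1`: the constant nodes
are fixed, the places of `N1` are exactly the non-constant ∘-leaves, and every other node is the
sum of its agglomeration children, so values propagate along the agglomeration arcs, which are
well founded by acyclicity (T5). Hence the sets `Inv(m2')` are pairwise disjoint. The values of
such a configuration solve `E`, so (A3) makes its restriction to `P1` reachable in `N1` iff its
restriction to `P2` is reachable in `N2`. Conversely, every solution of `E`, completed by the
constants, is a total well-defined configuration, which together with (A1) gives non-emptiness
and covering.
-/

theorem wellFounded_of_transGen_irrefl {α : Type} (A : Finset (α × α))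
    (hA : ∀ v, ¬ Relation.TransGen (fun a b => (a, b) ∈ A) v v) :
    WellFounded (fun w v => (v, w) ∈ A) := by
  classical
  -- the number of arc targets strictly below `v` decreases along every arc
  let depth (v : α) : ℕ :=
    ((A.image Prod.snd).filter (Relation.TransGen (fun a b => (a, b) ∈ A) v)).card
  refine (InvImage.wf depth wellFounded_lt).mono fun w v hvw => card_lt_card ?_
  refine Finset.ssubset_iff_of_subset (fun u hu => ?_) |>.2 ⟨w, ?_, ?_⟩
  · rw [mem_filter] at hu ⊢
    exact ⟨hu.1, .head hvw hu.2⟩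
  · exact mem_filter.2 ⟨mem_image.2 ⟨(v, w), hvw, rfl⟩, .single hvw⟩
  · exact fun hw => hA w (mem_filter.1 hw).2

theorem eq_some_cval {c : V → Option ℕ} {v : V} (hv : c v ≠ none) :
    c v = some (cval c v) := by
  obtain ⟨n, hn⟩ := Option.ne_none_iff_exists'.1 hv
  simp [cval, hn]

theorem compatM_iff_restrict_eq {c : V → Option ℕ} (hc : TotalConf c) {P : Set V}
    {m : ↥P → ℕ} : CompatM c P m ↔ restrict c P = m := by
  refine ⟨fun h => funext fun p => by simp [_root_.restrict, cval, h p], ?_⟩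
  rintro rfl p
  exact eq_some_cval (hc p)

namespace TFG

variable {G : TFG V}

theorem mem_aggChildren {v w : V} : w ∈ G.aggChildren v ↔ (v, w) ∈ G.A := by
  simp [aggChildren]

theorem WellDef.cval_eq_sum_aggChildren {c : V → Option ℕ} (hc : G.WellDef c) {v : V}
    (hv : c v ≠ none) (hne : (G.aggChildren v).Nonempty) :
    cval c v = ∑ w ∈ G.aggChildren v, cval c w :=
  (hc.2 v _ (eq_some_cval hv)).1 hne

theorem WellDef.cval_eq_sum_redParents {c : V → Option ℕ} (hc : G.WellDef c) {v : V}
    (hv : c v ≠ none) (hne : (G.redParents v).Nonempty) :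
    cval c v = ∑ w ∈ G.redParents v, cval c w :=
  (hc.2 v _ (eq_some_cval hv)).2 hne

def extend (G : TFG V) (s : V → ℕ) : V → Option ℕ :=
  fun v => some ((G.kval v).getD (s v))

theorem isConfig_extend (s : V → ℕ) : G.IsConfig (G.extend s) := by
  intro v n h
  simp [extend, h]

theorem totalConf_extend (s : V → ℕ) : TotalConf (G.extend s) := by
  intro v
  simp [extend]

theorem cval_extend {s : V → ℕ} {v : V} (hv : G.kval v = none) : cval (G.extend s) v = s v := by
  simp [cval, extend, hv]

end TFG

namespace WellFormed

open TFG

variable {G : TFG V} {E : EqSys V} {P1 P2 : Set V}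

theorem kval_eq_none (hwf : WellFormed G E P1 P2) {v : V} (hv : v ∈ P1 ∪ P2 ∪ fvars E) :
    G.kval v = none := by
  rw [← hwf.T1] at hv
  exact hv

theorem kval_eq_none_of_mem_left (hwf : WellFormed G E P1 P2) (p : ↥P1) : G.kval p = none :=
  hwf.kval_eq_none (.inl (.inl p.2))

theorem kval_eq_none_of_mem_right (hwf : WellFormed G E P1 P2) (p : ↥P2) : G.kval p = none :=
  hwf.kval_eq_none (.inl (.inr p.2))

theorem wellFounded_aggChild (hwf : WellFormed G E P1 P2) :
    WellFounded (fun w v => (v, w) ∈ G.A) :=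
  wellFounded_of_transGen_irrefl G.A fun v hv =>
    hwf.T5 v (Relation.TransGen.mono (p := G.Edge) (fun _ _ h => Or.inr h) v v hv)

theorem aggChildren_nonempty (hwf : WellFormed G E P1 P2) {v : V} (hk : G.kval v = none)
    (hv : v ∉ P1) : (G.aggChildren v).Nonempty := by
  have hleaf : ¬ G.IsCircLeaf v := fun h => hv ((hwf.T6leaf v hk).1 h)
  simp only [IsCircLeaf, not_forall, not_not] at hleaf
  obtain ⟨w, hw⟩ := hleaf
  exact ⟨w, mem_aggChildren.2 hw⟩

theorem solves_cval (hwf : WellFormed G E P1 P2) {c : V → Option ℕ} (hc : TotalConf c)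
    (hw : G.WellDef c) : Solves E (cval c) := by
  rintro ⟨v, X⟩ he
  obtain ⟨rfl | rfl, hne⟩ := (hwf.T4 v X).2 he
  · exact hw.cval_eq_sum_aggChildren (hc v) hne
  · exact hw.cval_eq_sum_redParents (hc v) hne

theorem cval_extend_eq_sum (hwf : WellFormed G E P1 P2) {s : V → ℕ} (hs : Solves E s)
    {v : V} {X : Finset V} (he : (v, X) ∈ E) :
    cval (G.extend s) v = ∑ w ∈ X, cval (G.extend s) w := by
  have hfv : ∀ u, (u = v ∨ u ∈ X) → G.kval u = none := fun u hu =>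
    hwf.kval_eq_none (.inr ⟨(v, X), he, hu⟩)
  rw [cval_extend (hfv v (.inl rfl)), hs _ he]
  exact sum_congr rfl fun w hw => (cval_extend (hfv w (.inr hw))).symm

theorem wellDef_extend (hwf : WellFormed G E P1 P2) {s : V → ℕ} (hs : Solves E s) :
    G.WellDef (G.extend s) := by
  refine ⟨fun v w _ => by simp [extend], fun v n hn => ?_⟩
  have hvn : n = cval (G.extend s) v := by simp [cval, hn]
  exact ⟨fun hne => hvn ▸ hwf.cval_extend_eq_sum hs ((hwf.T4 v _).1 ⟨.inl rfl, hne⟩),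
    fun hne => hvn ▸ hwf.cval_extend_eq_sum hs ((hwf.T4 v _).1 ⟨.inr rfl, hne⟩)⟩

theorem exists_restrict_eq_of_agreesOn (hwf : WellFormed G E P1 P2) {P : Set V}
    (hP : ∀ p : ↥P, G.kval p = none) {s : V → ℕ} (hs : Solves E s) {m : ↥P → ℕ}
    (hm : AgreesOn s P m) :
    ∃ c, G.IsConfig c ∧ TotalConf c ∧ G.WellDef c ∧ restrict c P = m :=
  ⟨G.extend s, isConfig_extend s, totalConf_extend s, hwf.wellDef_extend hs,
    funext fun p => (cval_extend (hP p)).trans (hm p)⟩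

theorem eq_of_restrict_eq (hwf : WellFormed G E P1 P2) {c c' : V → Option ℕ}
    (hc : G.IsConfig c) (ht : TotalConf c) (hw : G.WellDef c)
    (hc' : G.IsConfig c') (ht' : TotalConf c') (hw' : G.WellDef c')
    (h : restrict c P1 = restrict c' P1) : c = c' := by
  suffices hval : cval c = cval c' from
    funext fun v => by rw [eq_some_cval (ht v), eq_some_cval (ht' v), hval]
  funext v
  induction v using hwf.wellFounded_aggChild.induction with
  | _ v ih =>
  cases hk : G.kval v with
  | some k => simp [cval, hc v k hk, hc' v k hk]
  | none =>
    by_cases hv : v ∈ P1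
    · exact congrFun h ⟨v, hv⟩
    · have hne := hwf.aggChildren_nonempty hk hv
      rw [hw.cval_eq_sum_aggChildren (ht v) hne, hw'.cval_eq_sum_aggChildren (ht' v) hne]
      exact sum_congr rfl fun w hw => ih w (mem_aggChildren.1 hw)

theorem reach_iff_of_wellDef {N1 : PetriNet ↥P1} {m1 : ↥P1 → ℕ} {N2 : PetriNet ↥P2}
    {m2 : ↥P2 → ℕ} (hwf : WellFormed G E P1 P2) (heq : EEquiv E P1 P2 N1 m1 N2 m2)
    {c : V → Option ℕ} (ht : TotalConf c) (hw : G.WellDef c) :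
    N1.reach m1 (restrict c P1) ↔ N2.reach m2 (restrict c P2) :=
  heq.A3 _ _ ⟨cval c, hwf.solves_cval ht hw, fun _ => rfl, fun _ => rfl⟩

end WellFormed

theorem state_space_partition_general {V : Type} [DecidableEq V] (G : TFG V) (E : EqSys V)
    (P1 P2 : Set V)
    (N1 : PetriNet ↥P1) (m1 : ↥P1 → ℕ) (N2 : PetriNet ↥P2) (m2 : ↥P2 → ℕ)
    (hwf : WellFormed G E P1 P2) (heq : EEquiv E P1 P2 N1 m1 N2 m2) :
    (∀ m2' : ↥P2 → ℕ, N2.reach m2 m2' →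
        ({m : ↥P1 → ℕ | ∃ c : V → Option ℕ, G.IsConfig c ∧ TotalConf c ∧ G.WellDef c ∧
          CompatM c P2 m2' ∧ restrict c P1 = m}).Nonempty) ∧
    (∀ m2' m2'' : ↥P2 → ℕ, N2.reach m2 m2' → N2.reach m2 m2'' → m2' ≠ m2'' →
        {m : ↥P1 → ℕ | ∃ c : V → Option ℕ, G.IsConfig c ∧ TotalConf c ∧ G.WellDef c ∧
          CompatM c P2 m2' ∧ restrict c P1 = m} ∩
        {m : ↥P1 → ℕ | ∃ c : V → Option ℕ, G.IsConfig c ∧ TotalConf c ∧ G.WellDef c ∧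
          CompatM c P2 m2'' ∧ restrict c P1 = m} = ∅) ∧
    (⋃ m2' ∈ {m : ↥P2 → ℕ | N2.reach m2 m},
        {m : ↥P1 → ℕ | ∃ c : V → Option ℕ, G.IsConfig c ∧ TotalConf c ∧ G.WellDef c ∧
          CompatM c P2 m2' ∧ restrict c P1 = m}) = {m : ↥P1 → ℕ | N1.reach m1 m} := by
  refine ⟨fun m2' h2 => ?_, fun m2' m2'' _ _ hne => ?_, ?_⟩
  · obtain ⟨s, hs, hag⟩ := heq.A1r m2' h2
    obtain ⟨c, hc, ht, hw, hr⟩ :=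
      hwf.exists_restrict_eq_of_agreesOn hwf.kval_eq_none_of_mem_right hs hag
    exact ⟨_, c, hc, ht, hw, (compatM_iff_restrict_eq ht).2 hr, rfl⟩
  · refine Set.eq_empty_iff_forall_notMem.2 ?_
    rintro _ ⟨⟨c, hc, ht, hw, hcm, rfl⟩, ⟨c', hc', ht', hw', hcm', hr⟩⟩
    rw [compatM_iff_restrict_eq ht] at hcm
    rw [compatM_iff_restrict_eq ht'] at hcm'
    obtain rfl := hwf.eq_of_restrict_eq hc ht hw hc' ht' hw' hr.symm
    exact hne (hcm.symm.trans hcm')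
  · ext m
    simp only [Set.mem_iUnion, Set.mem_ofPred_eq, exists_prop]
    constructor
    · rintro ⟨m2', h2, c, -, ht, hw, hcm, rfl⟩
      rw [compatM_iff_restrict_eq ht] at hcm
      exact (hwf.reach_iff_of_wellDef heq ht hw).2 (hcm ▸ h2)
    · intro h1
      obtain ⟨s, hs, hag⟩ := heq.A1l m h1
      obtain ⟨c, hc, ht, hw, rfl⟩ :=
        hwf.exists_restrict_eq_of_agreesOn hwf.kval_eq_none_of_mem_left hs hag
      exact ⟨_, (hwf.reach_iff_of_wellDef heq ht hw).1 h1, c, hc, ht, hw,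
        (compatM_iff_restrict_eq ht).2 rfl, rfl⟩

theorem state_space_partition {V : Type} [DecidableEq V] (G : TFG V) (E : EqSys V)
    (P1 P2 : Set V) [DecidablePred (· ∈ P1)] [DecidablePred (· ∈ P2)]
    (N1 : PetriNet ↥P1) (m1 : ↥P1 → ℕ) (N2 : PetriNet ↥P2) (m2 : ↥P2 → ℕ)
    (hwf : WellFormed G E P1 P2) (heq : EEquiv E P1 P2 N1 m1 N2 m2) :
    (∀ m2' : ↥P2 → ℕ, N2.reach m2 m2' →
        ({m : ↥P1 → ℕ | ∃ c : V → Option ℕ, G.IsConfig c ∧ TotalConf c ∧ G.WellDef c ∧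
          CompatM c P2 m2' ∧ restrict c P1 = m}).Nonempty) ∧
    (∀ m2' m2'' : ↥P2 → ℕ, N2.reach m2 m2' → N2.reach m2 m2'' → m2' ≠ m2'' →
        {m : ↥P1 → ℕ | ∃ c : V → Option ℕ, G.IsConfig c ∧ TotalConf c ∧ G.WellDef c ∧
          CompatM c P2 m2' ∧ restrict c P1 = m} ∩
        {m : ↥P1 → ℕ | ∃ c : V → Option ℕ, G.IsConfig c ∧ TotalConf c ∧ G.WellDef c ∧
          CompatM c P2 m2'' ∧ restrict c P1 = m} = ∅) ∧
    (⋃ m2' ∈ {m : ↥P2 → ℕ | N2.reach m2 m},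
        {m : ↥P1 → ℕ | ∃ c : V → Option ℕ, G.IsConfig c ∧ TotalConf c ∧ G.WellDef c ∧
          CompatM c P2 m2' ∧ restrict c P1 = m}) = {m : ↥P1 → ℕ | N1.reach m1 m} :=
  state_space_partition_general G E P1 P2 N1 m1 N2 m2 hwf heq
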